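/- Let R be a commutative ring and M an R-module. The following are equivalent: (1) M is quasi-projective (i.e., for every epimorphism f : M → N, the induced map Hom_R(M,f) : Hom_R(M,M) → Hom_R(M,N) is an epimorphism); (2) for every prime ideal p of R, M is u-(R∖p)-quasi-projective; (3) for every maximal ideal m of R, M is u-(R∖m)-quasi-projective. The analogous equivalence holds with 'quasi-injective' in place of 'quasi-projective' (where M is quasi-injective if for every monomorphism g : K → M, the induced map Hom_R(g,M) : Hom_R(M,M) → Hom_R(K,M) is an epimorphism). -/

import Mathlib

universe u v w

variable (R : Type u) [CommRing R]

/-- An `R`-module `T` is uniformly `S`-torsion if there is `s ∈ S` with `s • T = 0`. -/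
def IsUSTorsion (S : Submonoid R) (T : Type*) [AddCommGroup T] [Module R T] : Prop :=
  ∃ s ∈ S, ∀ t : T, s • t = 0

/-- `f` is a `u`-`S`-epimorphism if its cokernel is uniformly `S`-torsion. -/
def IsUSEpi (S : Submonoid R) {M N : Type*} [AddCommGroup M] [Module R M]
    [AddCommGroup N] [Module R N] (f : M →ₗ[R] N) : Prop :=
  IsUSTorsion R S (N ⧸ LinearMap.range f)

/-- `f` is a `u`-`S`-monomorphism if its kernel is uniformly `S`-torsion. -/
def IsUSMono (S : Submonoid R) {M N : Type*} [AddCommGroup M] [Module R M]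
    [AddCommGroup N] [Module R N] (f : M →ₗ[R] N) : Prop :=
  IsUSTorsion R S (LinearMap.ker f)

/-- `P` is `u`-`S`-projective relative to `M` if for every `u`-`S`-epimorphism
`f : M → N`, the induced map `Hom(P,M) → Hom(P,N)` is a `u`-`S`-epimorphism. -/
def IsUSProjRel (S : Submonoid R) (P : Type w) [AddCommGroup P] [Module R P]
    (M : Type v) [AddCommGroup M] [Module R M] : Prop :=
  ∀ (N : Type v) [AddCommGroup N] [Module R N] (f : M →ₗ[R] N),
    IsUSEpi R S f → IsUSEpi R S (LinearMap.llcomp R P M N f : (P →ₗ[R] M) →ₗ[R] P →ₗ[R] N)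

/-- `E` is `u`-`S`-injective relative to `M` if for every `u`-`S`-monomorphism
`f : K → M`, the induced map `Hom(M,E) → Hom(K,E)` is a `u`-`S`-epimorphism. -/
def IsUSInjRel (S : Submonoid R) (E : Type w) [AddCommGroup E] [Module R E]
    (M : Type v) [AddCommGroup M] [Module R M] : Prop :=
  ∀ (K : Type v) [AddCommGroup K] [Module R K] (f : K →ₗ[R] M),
    IsUSMono R S f → IsUSEpi R S (LinearMap.lcomp R E f)


private lemma mem_of_forall_maximal {N : Type*} [AddCommGroup N] [Module R N]
    (Q : Submodule R N) (g : N)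
    (h : ∀ (m : Ideal R), m.IsMaximal → ∃ s ∉ m, s • g ∈ Q) : g ∈ Q := by
  set I : Ideal R := Submodule.comap (LinearMap.toSpanSingleton R N g) Q with hIdef
  have hI : I = ⊤ := by
    by_contra h'
    obtain ⟨m, hm, hle⟩ := Ideal.exists_le_maximal I h'
    obtain ⟨s, hs, hsg⟩ := h m hm
    exact hs (hle hsg)
  have h1 : (1 : R) ∈ I := hI ▸ trivial
  simpa [hIdef, Submodule.mem_comap] using h1

theorem stmt17 (M : Type v) [AddCommGroup M] [Module R M] :
    List.TFAE
      [ ∀ (N : Type v) [AddCommGroup N] [Module R N] (f : M →ₗ[R] N),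
          Function.Surjective f → Function.Surjective (LinearMap.llcomp R M M N f : (M →ₗ[R] M) →ₗ[R] M →ₗ[R] N),
        ∀ (p : Ideal R) [p.IsPrime], IsUSProjRel R p.primeCompl M M,
        ∀ (m : Ideal R) [m.IsMaximal], IsUSProjRel R m.primeCompl M M ] ∧
    List.TFAE
      [ ∀ (K : Type v) [AddCommGroup K] [Module R K] (g : K →ₗ[R] M),
          Function.Injective g → Function.Surjective (LinearMap.lcomp R M g),
        ∀ (p : Ideal R) [p.IsPrime], IsUSInjRel R p.primeCompl M M,
        ∀ (m : Ideal R) [m.IsMaximal], IsUSInjRel R m.primeCompl M M ] := by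
  constructor
  · tfae_have 1 → 2 := by
      intro h1 p _ N _ _ f hf
      obtain ⟨s, hs, hst⟩ := hf
      refine ⟨s, hs, fun t => ?_⟩
      obtain ⟨g, rfl⟩ := Submodule.Quotient.mk_surjective _ t
      rw [← Submodule.Quotient.mk_smul, Submodule.Quotient.mk_eq_zero]
      have hmem : ∀ x : M, (s • g) x ∈ LinearMap.range f := by
        intro x
        have h2 := hst (Submodule.Quotient.mk (g x))
        rw [← Submodule.Quotient.mk_smul, Submodule.Quotient.mk_eq_zero] at h2
        simpa using h2
      obtain ⟨h, hh⟩ := h1 (LinearMap.range f) f.rangeRestrict f.surjective_rangeRestrict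
        (LinearMap.codRestrict _ (s • g) hmem)
      refine ⟨h, ?_⟩
      ext x
      simpa using congrArg Subtype.val (LinearMap.congr_fun hh x)
    tfae_have 2 → 3 := by
      intro h2 m _
      exact h2 m
    tfae_have 3 → 1 := by
      intro h3 N _ _ f hf g
      have hg : g ∈ LinearMap.range (LinearMap.llcomp R M M N f : (M →ₗ[R] M) →ₗ[R] M →ₗ[R] N) := by
        apply mem_of_forall_maximal
        intro m hm
        have husepi : IsUSEpi R m.primeCompl f := by
          refine ⟨1, m.primeCompl.one_mem, fun t => ?_⟩
          obtain ⟨n, rfl⟩ := Submodule.Quotient.mk_surjective _ t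
          rw [one_smul, Submodule.Quotient.mk_eq_zero]
          exact hf n
        obtain ⟨s, hs, hst⟩ := @h3 m hm N _ _ f husepi
        refine ⟨s, hs, ?_⟩
        have h2 := hst (Submodule.Quotient.mk g)
        rwa [← Submodule.Quotient.mk_smul, Submodule.Quotient.mk_eq_zero] at h2
      exact hg
    tfae_finish
  · tfae_have 1 → 2 := by
      intro h1 p _ K _ _ g hg
      obtain ⟨s, hs, hst⟩ := hg
      refine ⟨s, hs, fun t => ?_⟩
      obtain ⟨φ, rfl⟩ := Submodule.Quotient.mk_surjective _ t
      rw [← Submodule.Quotient.mk_smul, Submodule.Quotient.mk_eq_zero]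
      have hker : LinearMap.ker g ≤ LinearMap.ker (s • φ) := by
        intro k hk
        have hk0 : s • k = 0 := congrArg Subtype.val (hst ⟨k, hk⟩)
        rw [LinearMap.mem_ker, LinearMap.smul_apply, ← map_smul, hk0, map_zero]
      set φbar := Submodule.liftQ (LinearMap.ker g) (s • φ) hker with hφbar
      set gbar := Submodule.liftQ (LinearMap.ker g) g le_rfl with hgbar
      have hinj : Function.Injective gbar := by
        rw [← LinearMap.ker_eq_bot]
        exact Submodule.ker_liftQ_eq_bot _ _ _ le_rfl
      obtain ⟨h, hh⟩ := h1 (K ⧸ LinearMap.ker g) gbar hinj φbar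
      refine ⟨h, ?_⟩
      ext k
      have h2 := LinearMap.congr_fun hh (Submodule.Quotient.mk k)
      simpa [hφbar, hgbar] using h2
    tfae_have 2 → 3 := by
      intro h2 m _
      exact h2 m
    tfae_have 3 → 1 := by
      intro h3 K _ _ g hg φ
      have hφ : φ ∈ LinearMap.range (LinearMap.lcomp R M g) := by
        apply mem_of_forall_maximal
        intro m hm
        have husmono : IsUSMono R m.primeCompl g := by
          refine ⟨1, m.primeCompl.one_mem, fun t => ?_⟩
          rw [one_smul]
          exact Subtype.ext (hg ((LinearMap.mem_ker.mp t.2).trans (map_zero g).symm))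
        obtain ⟨s, hs, hst⟩ := @h3 m hm K _ _ g husmono
        refine ⟨s, hs, ?_⟩
        have h2 := hst (Submodule.Quotient.mk φ)
        rwa [← Submodule.Quotient.mk_smul, Submodule.Quotient.mk_eq_zero] at h2
      exact hφ
    tfae_finish
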